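/- arXiv:2207.12179 — 5 statements merged into one kernel-verified Lean document; each statement's English description precedes it below -/
import Mathlib

section
/- In a college admissions market with a single common strict priority order over students, the unique stable matching is Pareto efficient for students: there is no other matching that makes every student weakly better off and some student strictly better off. -/
open Finset
open scoped Classical

/-- A common-priority college admissions market: `n` students (index `0` is the
highest priority / highest score), `m` colleges with capacities `q`, and for each
student an injective ranking of the options in `Option (Fin m)` (`none` = being
unassigned / matched to oneself); a lower rank means more preferred. -/
structure Market (n m : ℕ) where
  q : Fin m → ℕ
  rank : Fin n → Option (Fin m) → ℕ
  rank_inj : ∀ i, Function.Injective (rank i)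

namespace Market

variable {n m : ℕ}

/-- `i` strictly prefers option `a` to option `b`. -/
def Prefers (M : Market n m) (i : Fin n) (a b : Option (Fin m)) : Prop :=
  M.rank i a < M.rank i b

/-- A matching: each student gets a college or `none`, capacities respected. -/
def IsMatching (M : Market n m) (μ : Fin n → Option (Fin m)) : Prop :=
  ∀ c : Fin m, (univ.filter fun i => μ i = some c).card ≤ M.q c

/-- Individual rationality. -/
def IR (M : Market n m) (μ : Fin n → Option (Fin m)) : Prop :=
  ∀ i c, μ i = some c → M.Prefers i (some c) none

/-- `(i, c)` blocks `μ`: `i` prefers `c` to her assignment and `c` has a free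
seat or holds a student of strictly lower priority. -/
def Blocks (M : Market n m) (μ : Fin n → Option (Fin m)) (i : Fin n) (c : Fin m) : Prop :=
  M.Prefers i (some c) (μ i) ∧
    ((univ.filter fun j => μ j = some c).card < M.q c ∨ ∃ j, μ j = some c ∧ i < j)

/-- Stability: a matching, individually rational, with no blocking pair. -/
def Stable (M : Market n m) (μ : Fin n → Option (Fin m)) : Prop :=
  M.IsMatching μ ∧ M.IR μ ∧ ∀ i c, ¬ M.Blocks μ i c

/-- Given an application profile, student `i` is tentatively held: she applies to
some college `c` and fewer than `q c` higher-priority students apply to `c`. -/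
def Held (M : Market n m) (app : Fin n → Option (Fin m)) (i : Fin n) : Prop :=
  ∃ c, app i = some c ∧ (univ.filter fun j => app j = some c ∧ j < i).card < M.q c

/-- The tentative matching induced by an application profile. -/
noncomputable def tentative (M : Market n m) (app : Fin n → Option (Fin m)) (i : Fin n) :
    Option (Fin m) :=
  if M.Held app i then app i else none

/-- `i` meets the current cutoff of `c`: `c` has a free seat in the tentative
matching, or tentatively holds a student of lower priority than `i`. -/
def Feasible (M : Market n m) (app : Fin n → Option (Fin m)) (i : Fin n) (c : Fin m) : Prop :=
  (univ.filter fun j => M.tentative app j = some c).card < M.q c ∨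
    ∃ j, M.tentative app j = some c ∧ i < j

/-- The option `o` is available to `i`: `none` always is, a college iff `i`
meets its cutoff. -/
def FeasibleOpt (M : Market n m) (app : Fin n → Option (Fin m)) (i : Fin n)
    (o : Option (Fin m)) : Prop :=
  o = none ∨ ∃ c, o = some c ∧ M.Feasible app i c

/-- One round of simultaneous straightforward revision: students who are not
rejected keep their application; every rejected student applies to her most
preferred option among those whose cutoff she meets. -/
def Step (M : Market n m) (app app' : Fin n → Option (Fin m)) : Prop :=
  ∀ i,
    (M.tentative app i = app i → app' i = app i) ∧
    (M.tentative app i ≠ app i →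
      M.FeasibleOpt app i (app' i) ∧
        ∀ o, M.FeasibleOpt app i o → M.rank i (app' i) ≤ M.rank i o)

/-- A run of the TCDM under straightforward strategies: `app t` is the profile of
applications in round `t + 1`; in round one every student applies to her most
preferred option, and each later round is a straightforward revision.  The
outcome of the TCDM with round limit `T ≥ 1` is `M.tentative (app (T - 1))`. -/
def IsRun (M : Market n m) (app : ℕ → Fin n → Option (Fin m)) : Prop :=
  (∀ i o, M.rank i (app 0 i) ≤ M.rank i o) ∧ ∀ t, M.Step (app t) (app (t + 1))

/-- Admission cutoff of college `c` (student `i` has score `n - i`): the lowest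
score among tentatively held students if `c` is at capacity, `0` otherwise. -/
noncomputable def cutoff (M : Market n m) (app : Fin n → Option (Fin m)) (c : Fin m) : ℕ :=
  if h : M.q c ≤ (univ.filter fun j => M.tentative app j = some c).card ∧
      (univ.filter fun j => M.tentative app j = some c).Nonempty then
    n - ((univ.filter fun j => M.tentative app j = some c).max' h.2 : ℕ)
  else 0

/-- Serial dictatorship outcome: in priority order each student receives her most
preferred option among `none` and the colleges not yet filled by
higher-priority students. -/
def IsSerialDictatorship (M : Market n m) (μ : Fin n → Option (Fin m)) : Prop :=
  ∀ i,
    (μ i = none ∨ ∃ c, μ i = some c ∧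
        (univ.filter fun j => j < i ∧ μ j = some c).card < M.q c) ∧
    ∀ o, (o = none ∨ ∃ c, o = some c ∧
        (univ.filter fun j => j < i ∧ μ j = some c).card < M.q c) →
      M.rank i (μ i) ≤ M.rank i o

end Market

/-- The market induced by capacities `q` and a profile `P` of strict preferences
over colleges (every college acceptable, `none` ranked last), where the
preference order of student `i` ranks college `c` in position `P i c`. -/
noncomputable def mkMarket {n m : ℕ} (q : Fin m → ℕ) (P : Fin n → Equiv.Perm (Fin m)) :
    Market n m where
  q := q
  rank := fun i o => o.elim m fun c => (P i c : ℕ)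
  rank_inj := by
    intro i a b h
    match a, b with
    | none, none => rfl
    | none, some c =>
      simp only [Option.elim] at h
      exact absurd h.symm (Nat.ne_of_lt (P i c).isLt)
    | some c, none =>
      simp only [Option.elim] at h
      exact absurd h (Nat.ne_of_lt (P i c).isLt)
    | some c, some d =>
      simp only [Option.elim] at h
      exact congrArg some ((P i).injective (Fin.val_injective h))

/-!
Let `i` be the highest-priority student whose assignment differs between `μ` and a Pareto
improvement `ν`. She strictly gains, and individual rationality of `μ` forces `ν i = some c`.
Since `(i, c)` does not block `μ`, every seat of `c` under `μ` is held by a student of higher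
priority than `i`; those students keep their seats under `ν`, so `ν` overfills `c`.
-/

theorem Finset.card_filter_eq_lt_of_agree_below {ι α : Type*} [Fintype ι] [LinearOrder ι]
    [DecidableEq α] {f g : ι → α} {a : α} {i : ι} (hfi : f i = a) (hgi : g i ≠ a)
    (hagree : ∀ j < i, f j = g j) (hle : ∀ j, g j = a → j ≤ i) :
    (univ.filter fun j => g j = a).card < (univ.filter fun j => f j = a).card := by
  refine Finset.card_lt_card (Finset.ssubset_iff_of_subset ?_ |>.mpr ⟨i, ?_, ?_⟩)
  · intro j hj
    simp only [mem_filter, mem_univ, true_and] at hj ⊢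
    have hji : j < i := (hle j hj).lt_of_ne fun h => hgi (h ▸ hj)
    rw [hagree j hji, hj]
  · simpa using hfi
  · simpa using hgi

namespace Market

variable {n m : ℕ} (M : Market n m)

theorem prefers_of_rank_le_of_ne {i : Fin n} {a b : Option (Fin m)}
    (h : M.rank i a ≤ M.rank i b) (hne : a ≠ b) : M.Prefers i a b :=
  h.lt_of_ne fun e => hne (M.rank_inj i e)

variable {M}

theorem IR.ne_none_of_prefers {μ : Fin n → Option (Fin m)} (h : M.IR μ) {i : Fin n}
    {o : Option (Fin m)} (ho : M.Prefers i o (μ i)) : o ≠ none := by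
  rintro rfl
  cases hμi : μ i with
  | none => rw [hμi] at ho; exact lt_irrefl _ ho
  | some c => rw [hμi] at ho; exact lt_asymm ho (h i c hμi)

end Market

/-- the unique stable matching is Pareto efficient for students. -/
theorem stable_matching_pareto_efficient (n m : ℕ) (M : Market n m)
    (μ : Fin n → Option (Fin m)) (hμ : M.Stable μ) :
    ¬ ∃ ν : Fin n → Option (Fin m), M.IsMatching ν ∧
      (∀ i, M.rank i (ν i) ≤ M.rank i (μ i)) ∧
      ∃ i, M.rank i (ν i) < M.rank i (μ i) := by
  rintro ⟨ν, hν, hdom, i₀, hi₀⟩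
  obtain ⟨-, hIR, hnb⟩ := hμ
  obtain ⟨i, hi, hfirst⟩ := wellFounded_lt.has_min {j | ν j ≠ μ j}
    ⟨i₀, fun h => hi₀.ne (congrArg _ h)⟩
  have hagree : ∀ j < i, ν j = μ j := fun j hj => not_not.mp fun h => hfirst j h hj
  have hgain : M.Prefers i (ν i) (μ i) := M.prefers_of_rank_le_of_ne (hdom i) hi
  obtain ⟨c, hc⟩ := Option.ne_none_iff_exists'.mp (hIR.ne_none_of_prefers hgain)
  refine hnb i c ⟨hc ▸ hgain, ?_⟩
  by_cases hlow : ∃ j, μ j = some c ∧ i < j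
  · exact Or.inr hlow
  simp only [not_exists, not_and, not_lt] at hlow
  have hμi : μ i ≠ some c := hc ▸ Ne.symm hi
  exact Or.inl <|
    (Finset.card_filter_eq_lt_of_agree_below hc hμi hagree hlow).trans_le (hν c :)
end

section
/- In the time-constrained dynamic mechanism where all students follow straightforward strategies, if the mechanism halts because no student changes her application (before the round limit T is reached), then the resulting matching is the unique stable matching. -/
open Finset
open scoped Classical

/-!
A student can never regain a college whose cutoff she fails: such a college holds `q c`
students of higher priority, none of them is rejected, so they keep applying there. Hence in
every round each student applies to her favourite among the options whose cutoff she currently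
meets. At a halt nobody is rejected, so every student holds her favourite feasible option, which
is exactly the absence of blocking pairs. Under a common priority order any two stable matchings
coincide: by induction along the order, a student better off in one of them would block the other.
-/

-- `#(s.filter (· < j))` is the position of `j` in `s`, so the filter keeps the first `k` elements.
theorem Finset.card_filter_card_filter_lt_lt {α : Type*} [LinearOrder α] (s : Finset α)
    (k : ℕ) : #(s.filter fun j => #(s.filter (· < j)) < k) = min k #s := by
  set f : α → ℕ := fun j => #(s.filter (· < j))
  have hf : Set.InjOn f s := by
    refine StrictMonoOn.injOn fun a ha b _ hab => card_lt_card ⟨?_, fun hsub => ?_⟩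
    · exact monotone_filter_right s fun _ _ hx => hx.trans hab
    · simpa using hsub (mem_filter.mpr ⟨ha, hab⟩)
  have himage : s.image f = range #s := by
    refine eq_of_subset_of_card_le (fun x hx => ?_) ?_
    · obtain ⟨j, hj, rfl⟩ := mem_image.mp hx
      exact mem_range.mpr (card_lt_card ⟨filter_subset _ _, fun hsub => by simpa using hsub hj⟩)
    · rw [card_range, card_image_of_injOn hf]
  calc #(s.filter fun j => f j < k)
      = #((s.filter fun j => f j < k).image f) :=
        (card_image_of_injOn (hf.mono (filter_subset _ s))).symm
    _ = #((range #s).filter (· < k)) := by rw [← himage, filter_image]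
    _ = min k #s := by
        rw [show (range #s).filter (· < k) = range (min k #s) by ext; simp; omega, card_range]

namespace Market

variable {n m : ℕ} (M : Market n m)

def applicants (app : Fin n → Option (Fin m)) (c : Fin m) : Finset (Fin n) :=
  univ.filter fun j => app j = some c

theorem tentative_eq_some_iff {app : Fin n → Option (Fin m)} {j : Fin n} {c : Fin m} :
    M.tentative app j = some c ↔
      j ∈ applicants app c ∧ #((applicants app c).filter (· < j)) < M.q c := by
  rw [tentative]
  split_ifs with hheld
  · obtain ⟨c', hc', hcard⟩ := hheld
    simp only [applicants, filter_filter, mem_filter, mem_univ, true_and]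
    refine ⟨fun h => ⟨h, ?_⟩, fun h => h.1⟩
    obtain rfl : c' = c := Option.some_inj.mp (hc'.symm.trans h)
    exact hcard
  · simp only [applicants, filter_filter, mem_filter, mem_univ, true_and, false_iff]
    exact fun h => hheld ⟨c, h⟩

theorem card_tentative_eq_some (app : Fin n → Option (Fin m)) (c : Fin m) :
    #(univ.filter fun j => M.tentative app j = some c) = min (M.q c) #(applicants app c) := by
  have : (univ.filter fun j => M.tentative app j = some c) =
      (applicants app c).filter fun j => #((applicants app c).filter (· < j)) < M.q c := by
    ext j
    rw [mem_filter, mem_filter, tentative_eq_some_iff]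
    simp
  rw [this, card_filter_card_filter_lt_lt]

theorem not_feasible_of_le_card {app : Fin n → Option (Fin m)} {i : Fin n} {c : Fin m}
    (h : M.q c ≤ #((applicants app c).filter (· ≤ i))) : ¬ M.Feasible app i c := by
  rintro (hfree | ⟨j, hj, hij⟩)
  · rw [card_tentative_eq_some] at hfree
    have := card_filter_le (applicants app c) (· ≤ i)
    omega
  · have hbelow : (applicants app c).filter (· ≤ i) ⊆ (applicants app c).filter (· < j) :=
      monotone_filter_right _ fun _ _ hk => hk.trans_lt hij
    have := card_le_card hbelow
    have := ((M.tentative_eq_some_iff).mp hj).2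
    omega

variable {M}

theorem Step.tentative_eq_self {app : Fin n → Option (Fin m)} (h : M.Step app app) :
    M.tentative app = app := by
  funext i
  by_contra hi
  obtain ⟨hfeas, -⟩ := (h i).2 hi
  cases hc : app i with
  | none => simp [tentative, hc] at hi
  | some c =>
    rw [hc] at hi hfeas
    have hrejected : M.q c ≤ #((applicants app c).filter (· < i)) := by
      rw [tentative_eq_some_iff, not_and, not_lt] at hi
      exact hi (by simpa [applicants] using hc)
    obtain ⟨_, hc', hfc⟩ := hfeas.resolve_left (Option.some_ne_none c)
    obtain rfl := Option.some_inj.mp hc'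
    refine M.not_feasible_of_le_card (hrejected.trans (card_le_card ?_)) hfc
    exact monotone_filter_right _ fun _ _ hk => hk.le

theorem Step.not_feasible {app app' : Fin n → Option (Fin m)} (hstep : M.Step app app')
    {i : Fin n} {c : Fin m} (h : ¬ M.Feasible app i c) : ¬ M.Feasible app' i c := by
  simp only [Feasible, not_or, not_lt, not_exists, not_and] at h
  obtain ⟨hfull, hbelow⟩ := h
  refine M.not_feasible_of_le_card (hfull.trans (card_le_card fun j hj => ?_))
  replace hj := (mem_filter.mp hj).2
  have happ : app j = some c := by simpa [applicants] using ((M.tentative_eq_some_iff).mp hj).1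
  have hkeep : app' j = app j := (hstep j).1 (hj.trans happ.symm)
  simpa [applicants, hkeep, happ] using hbelow j hj

theorem IsRun.rank_le {app : ℕ → Fin n → Option (Fin m)} (hrun : M.IsRun app) (t : ℕ)
    (i : Fin n) {o : Option (Fin m)} (ho : M.FeasibleOpt (app t) i o) :
    M.rank i (app t i) ≤ M.rank i o := by
  induction t with
  | zero => exact hrun.1 i o
  | succ t ih =>
    have ho' : M.FeasibleOpt (app t) i o := by
      rcases ho with rfl | ⟨c, rfl, hc⟩
      · exact Or.inl rfl
      · exact Or.inr ⟨c, rfl, not_not.mp fun hnc => (hrun.2 t).not_feasible hnc hc⟩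
    by_cases hi : M.tentative (app t) i = app t i
    · rw [(hrun.2 t i).1 hi]
      exact ih ho'
    · exact ((hrun.2 t i).2 hi).2 o ho'

theorem stable_tentative {app : Fin n → Option (Fin m)} (hsettled : M.tentative app = app)
    (hopt : ∀ i o, M.FeasibleOpt app i o → M.rank i (app i) ≤ M.rank i o) :
    M.Stable (M.tentative app) := by
  refine ⟨fun c => (M.card_tentative_eq_some app c).trans_le (min_le_left _ _),
    fun i c hc => ?_, fun i c ⟨hpref, hfeas⟩ => ?_⟩
  · rw [hsettled] at hc
    have hle := hopt i none (Or.inl rfl)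
    rw [hc] at hle
    exact hle.lt_of_ne fun h => Option.some_ne_none c (M.rank_inj i h)
  · rw [hsettled] at hpref
    exact (hopt i (some c) (Or.inr ⟨c, rfl, hfeas⟩)).not_gt hpref

theorem Stable.not_prefers_of_eqOn_lt {μ ν : Fin n → Option (Fin m)} (hμ : M.Stable μ)
    (hν : M.Stable ν) {i : Fin n} (hlt : ∀ j < i, μ j = ν j) : ¬ M.Prefers i (μ i) (ν i) := by
  intro hpref
  cases hμi : μ i with
  | none =>
    cases hνi : ν i with
    | none => simp [hμi, hνi, Prefers] at hpref
    | some c => exact (hν.2.1 i c hνi).asymm (by simpa [hμi, hνi, Prefers] using hpref)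
  | some c =>
    rw [hμi] at hpref
    have hνi : ν i ≠ some c := fun h => (h ▸ hpref).false
    obtain ⟨hfull, hbelow⟩ : M.q c ≤ #(univ.filter fun j => ν j = some c) ∧
        ∀ j, ν j = some c → j ≤ i := by
      simpa [Blocks, hpref] using hν.2.2 i c
    have hsub : insert i (univ.filter fun j => ν j = some c) ⊆
        univ.filter fun j => μ j = some c := by
      intro j hj
      rcases mem_insert.mp hj with rfl | hj
      · simpa using hμi
      · replace hj := (mem_filter.mp hj).2
        have hji : j < i := (hbelow j hj).lt_of_ne fun h => hνi (h ▸ hj)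
        simpa [hlt j hji] using hj
    have hcard := card_le_card hsub
    rw [card_insert_of_notMem (by simpa using hνi)] at hcard
    have := hμ.1 c
    omega

theorem Stable.eq {μ ν : Fin n → Option (Fin m)} (hμ : M.Stable μ) (hν : M.Stable ν) :
    μ = ν := by
  funext i
  induction i using WellFoundedLT.induction with
  | _ i ih =>
    have hle := not_lt.mp (hμ.not_prefers_of_eqOn_lt hν ih)
    have hge := not_lt.mp (hν.not_prefers_of_eqOn_lt hμ fun j hj => (ih j hj).symm)
    exact M.rank_inj i (le_antisymm hge hle)

end Market

theorem tcdm_halt_is_unique_stable_general (n m : ℕ) (M : Market n m)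
    (app : ℕ → Fin n → Option (Fin m)) (hrun : M.IsRun app)
    (t : ℕ) (hhalt : app (t + 1) = app t) :
    M.Stable (M.tentative (app t)) ∧
      ∀ μ : Fin n → Option (Fin m), M.Stable μ → μ = M.tentative (app t) := by
  have hstep := hrun.2 t
  rw [hhalt] at hstep
  have hstable := Market.stable_tentative hstep.tentative_eq_self (hrun.rank_le t)
  exact ⟨hstable, fun μ hμ => hμ.eq hstable⟩

/-- if the TCDM (all students following straightforward strategies)
halts because no student changes her application before the round limit `T` is
reached, the resulting matching is the unique stable matching. -/
theorem tcdm_halt_is_unique_stable (n m : ℕ) (M : Market n m)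
    (app : ℕ → Fin n → Option (Fin m)) (hrun : M.IsRun app)
    (T t : ℕ) (ht : t + 1 < T) (hhalt : app (t + 1) = app t) :
    M.Stable (M.tentative (app t)) ∧
      ∀ μ : Fin n → Option (Fin m), M.Stable μ → μ = M.tentative (app t) :=
  tcdm_halt_is_unique_stable_general n m M app hrun t hhalt
end

section
/- In the common-priority college admissions model, if a student is assigned to her most preferred college under the DA outcome, then she is also assigned to her most preferred college under the TCDM outcome with straightforward strategies, for any round limit T ≥ 1. -/
open Finset
open scoped Classical

/-!
Let `μ` be stable. By induction on the rounds, no student ever applies to an option she likes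
less than her `μ`-match: a rejected student still meets the cutoff of her `μ`-college `d`,
because every student held at `d` has higher priority and, by stability, is matched to `d`
under `μ`, so `d` cannot be full. Hence the students of higher priority than `i` applying
to `μ i = some c` are all `μ`-matched to `c`, so fewer than `q c` of them exist and `i` is
held. A student whose DA college is her first choice applies to it in round one and is
therefore held in every round.
-/

namespace Market

variable {n m : ℕ} {M : Market n m}

lemma app_eq_of_tentative_eq_some {app : Fin n → Option (Fin m)} {j : Fin n} {d : Fin m}
    (h : M.tentative app j = some d) : app j = some d := by
  unfold tentative at h
  split_ifs at h
  exact h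

lemma tentative_eq_none_of_ne {app : Fin n → Option (Fin m)} {j : Fin n}
    (h : M.tentative app j ≠ app j) : M.tentative app j = none := by
  unfold tentative at h ⊢
  split_ifs at h ⊢
  · exact absurd rfl h
  · rfl

lemma tentative_eq_of_held {app : Fin n → Option (Fin m)} {j : Fin n} (h : M.Held app j) :
    M.tentative app j = app j :=
  if_pos h

namespace Stable

variable {μ app : Fin n → Option (Fin m)}

lemma eq_some_of_rank_le (hμ : M.Stable μ) {j w : Fin n} {d : Fin m}
    (hw : μ w = some d) (hjw : j < w) (hle : M.rank j (some d) ≤ M.rank j (μ j)) :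
    μ j = some d := by
  by_contra hne
  have hlt : M.rank j (some d) < M.rank j (μ j) :=
    lt_of_le_of_ne hle fun h => hne (M.rank_inj j h).symm
  exact hμ.2.2 j d ⟨hlt, Or.inr ⟨w, hw, hjw⟩⟩

lemma card_lt_q_of_applicants (hμ : M.Stable μ)
    (happ : ∀ j, M.rank j (app j) ≤ M.rank j (μ j)) {i : Fin n} {d : Fin m}
    (hi : μ i = some d) {s : Finset (Fin n)} (hs : ∀ j ∈ s, app j = some d ∧ j < i) :
    s.card < M.q d := by
  have hsub : s ⊆ univ.filter fun j => μ j = some d := fun j hj => by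
    obtain ⟨hjd, hji⟩ := hs j hj
    exact mem_filter.mpr ⟨mem_univ j, hμ.eq_some_of_rank_le hi hji (hjd ▸ happ j)⟩
  have hssub : s ⊂ univ.filter fun j => μ j = some d :=
    (ssubset_iff_of_subset hsub).mpr
      ⟨i, mem_filter.mpr ⟨mem_univ i, hi⟩, fun his => lt_irrefl i (hs i his).2⟩
  exact (card_lt_card hssub).trans_le (hμ.1 d)

lemma tentative_eq_of_app_eq (hμ : M.Stable μ)
    (happ : ∀ j, M.rank j (app j) ≤ M.rank j (μ j)) {i : Fin n} {d : Fin m}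
    (hi : μ i = some d) (hd : app i = some d) : M.tentative app i = some d := by
  have hheld : M.Held app i :=
    ⟨d, hd, hμ.card_lt_q_of_applicants happ hi fun _ hj => (mem_filter.mp hj).2⟩
  rw [tentative_eq_of_held hheld, hd]

lemma feasibleOpt_of_tentative_eq_none (hμ : M.Stable μ)
    (happ : ∀ j, M.rank j (app j) ≤ M.rank j (μ j)) {j : Fin n}
    (hj : M.tentative app j = none) : M.FeasibleOpt app j (μ j) := by
  rcases hjd : μ j with _ | d
  · exact Or.inl rfl
  refine Or.inr ⟨d, rfl, ?_⟩
  by_contra hnf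
  obtain ⟨hfull, hheld⟩ : M.q d ≤ (univ.filter fun k => M.tentative app k = some d).card ∧
      ∀ k, M.tentative app k = some d → k ≤ j := by
    simpa only [Feasible, not_or, not_lt, not_exists, not_and] using hnf
  refine (hμ.card_lt_q_of_applicants happ hjd fun k hk => ?_).not_ge hfull
  have hkd : M.tentative app k = some d := (mem_filter.mp hk).2
  refine ⟨app_eq_of_tentative_eq_some hkd, (hheld k hkd).lt_of_ne ?_⟩
  rintro rfl
  rw [hj] at hkd
  exact Option.some_ne_none d hkd.symm

end Stable

namespace IsRun

variable {app : ℕ → Fin n → Option (Fin m)} {μ : Fin n → Option (Fin m)}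

lemma rank_app_le_of_stable (hrun : M.IsRun app) (hμ : M.Stable μ) (t : ℕ) (j : Fin n) :
    M.rank j (app t j) ≤ M.rank j (μ j) := by
  induction t generalizing j with
  | zero => exact hrun.1 j (μ j)
  | succ t ih =>
    by_cases hkept : M.tentative (app t) j = app t j
    · rw [(hrun.2 t j).1 hkept]
      exact ih j
    · exact ((hrun.2 t j).2 hkept).2 (μ j)
        (hμ.feasibleOpt_of_tentative_eq_none ih (tentative_eq_none_of_ne hkept))

lemma app_eq_of_app_zero_eq_stable (hrun : M.IsRun app) (hμ : M.Stable μ) {i : Fin n}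
    {d : Fin m} (hi : μ i = some d) (h0 : app 0 i = some d) (t : ℕ) : app t i = some d := by
  induction t with
  | zero => exact h0
  | succ t ih =>
    have hheld := hμ.tentative_eq_of_app_eq (hrun.rank_app_le_of_stable hμ t) hi ih
    rw [(hrun.2 t i).1 (hheld.trans ih.symm), ih]

end IsRun

end Market

/-- a student assigned to her most preferred college under DA (the
unique stable matching) is also assigned to it under the TCDM with
straightforward strategies, for any round limit `T ≥ 1`. -/
theorem tcdm_preserves_DA_first_choice (n m : ℕ) (M : Market n m)
    (app : ℕ → Fin n → Option (Fin m)) (hrun : M.IsRun app)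
    (μDA : Fin n → Option (Fin m)) (hDA : M.Stable μDA)
    (i : Fin n) (c : Fin m) (hc : μDA i = some c)
    (htop : ∀ c' : Fin m, M.rank i (some c) ≤ M.rank i (some c')) :
    ∀ T : ℕ, 1 ≤ T → M.tentative (app (T - 1)) i = some c := by
  have h0 : app 0 i = some c := by
    refine M.rank_inj i (le_antisymm (hrun.1 i (some c)) ?_)
    rcases app 0 i with _ | c'
    · exact (hDA.2.1 i c hc).le
    · exact htop c'
  intro T _
  exact hDA.tentative_eq_of_app_eq (hrun.rank_app_le_of_stable hDA (T - 1)) hc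
    (hrun.app_eq_of_app_zero_eq_stable hDA hc h0 (T - 1))
end

section
/- There exists a common-priority college admissions market with 4 students and 4 unit-capacity colleges such that under the TCDM with round limit T = 2 and straightforward strategies, the lowest-priority student is assigned to a college she strictly prefers to her deferred-acceptance assignment. -/
open Finset
open scoped Classical

namespace Market

variable {n m : ℕ} {M : Market n m}

section UnitCapacity

variable (hq : ∀ c, M.q c = 1)
include hq

theorem held_iff_of_unit (app : Fin n → Option (Fin m)) (i : Fin n) :
    M.Held app i ↔ ∃ c, app i = some c ∧ ∀ j < i, app j ≠ some c := by
  simp only [Held, hq, Nat.lt_one_iff, card_filter_eq_zero_iff, mem_univ, true_implies]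
  exact exists_congr fun c => and_congr_right fun _ =>
    ⟨fun h j hj hc => h j ⟨hc, hj⟩, fun h j hj => h j hj.2 hj.1⟩

theorem tentative_eq_of_unit (app : Fin n → Option (Fin m)) :
    M.tentative app =
      fun i => if ∃ c, app i = some c ∧ ∀ j < i, app j ≠ some c then app i else none := by
  funext i
  simp only [tentative, held_iff_of_unit hq]

theorem feasible_iff_of_unit (app : Fin n → Option (Fin m)) (i : Fin n) (c : Fin m) :
    M.Feasible app i c ↔
      (∀ j, M.tentative app j ≠ some c) ∨ ∃ j, M.tentative app j = some c ∧ i < j := by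
  simp only [Feasible, hq, Nat.lt_one_iff, card_filter_eq_zero_iff, mem_univ, true_implies]

theorem stable_of_unit {μ : Fin n → Option (Fin m)}
    (hinj : ∀ a b c, μ a = some c → μ b = some c → a = b) (hIR : M.IR μ)
    (henvy : ∀ i c, M.Prefers i (some c) (μ i) → ∃ j < i, μ j = some c) :
    M.Stable μ := by
  refine ⟨fun c => ?_, hIR, fun i c ⟨hpref, hseat⟩ => ?_⟩
  · rw [hq, card_le_one]
    simp only [mem_filter, mem_univ, true_and]
    exact fun a ha b hb => hinj a b c ha hb
  · obtain ⟨j, hji, hj⟩ := henvy i c hpref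
    rcases hseat with hfree | ⟨k, hk, hik⟩
    · rw [hq, Nat.lt_one_iff, card_eq_zero, filter_eq_empty_iff] at hfree
      exact hfree (mem_univ j) hj
    · exact lt_asymm hji (hinj j k c hj hk ▸ hik)

end UnitCapacity

theorem step_self_of_tentative_eq {app : Fin n → Option (Fin m)} (h : M.tentative app = app) :
    M.Step app app :=
  fun i => ⟨fun _ => rfl, fun hne => absurd (congrFun h i) hne⟩

end Market

namespace IndirectEffect

/-- Students `0` and `1` rank `0 > 1 > 2 > 3`, students `2` and `3` rank `1 > 2 > 3 > 0`. -/
def prefs : Fin 4 → Equiv.Perm (Fin 4) := ![1, 1, Equiv.addRight 3, Equiv.addRight 3]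

noncomputable def market : Market 4 4 := mkMarket (fun _ => 1) prefs

theorem market_q (c : Fin 4) : market.q c = 1 := rfl

def daMatching : Fin 4 → Option (Fin 4) := ![some 0, some 1, some 2, some 3]

/-- In round two student `1`, rejected by college `0`, displaces student `2` from college `1`,
while student `3` takes the still free college `2`; student `2` claims college `2` only in
round three, after the round limit `T = 2`. -/
def rounds : ℕ → Fin 4 → Option (Fin 4)
  | 0 => ![some 0, some 0, some 1, some 1]
  | 1 => ![some 0, some 1, some 1, some 2]
  | 2 => ![some 0, some 1, some 2, some 2]
  | _ + 3 => daMatching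

theorem tentative_rounds_zero : market.tentative (rounds 0) = ![some 0, none, some 1, none] := by
  rw [Market.tentative_eq_of_unit market_q]; decide

theorem tentative_rounds_one : market.tentative (rounds 1) = ![some 0, some 1, none, some 2] := by
  rw [Market.tentative_eq_of_unit market_q]; decide

theorem tentative_rounds_two : market.tentative (rounds 2) = ![some 0, some 1, some 2, none] := by
  rw [Market.tentative_eq_of_unit market_q]; decide

theorem tentative_daMatching : market.tentative daMatching = daMatching := by
  rw [Market.tentative_eq_of_unit market_q]; decide

theorem step_rounds_zero : market.Step (rounds 0) (rounds 1) := by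
  simp only [Market.Step, Market.FeasibleOpt, Market.feasible_iff_of_unit market_q,
    tentative_rounds_zero]
  decide

theorem step_rounds_one : market.Step (rounds 1) (rounds 2) := by
  simp only [Market.Step, Market.FeasibleOpt, Market.feasible_iff_of_unit market_q,
    tentative_rounds_one]
  decide

theorem step_rounds_two : market.Step (rounds 2) (rounds 3) := by
  simp only [Market.Step, Market.FeasibleOpt, Market.feasible_iff_of_unit market_q,
    tentative_rounds_two]
  decide

theorem isRun_rounds : market.IsRun rounds := by
  refine ⟨by decide, fun t => ?_⟩
  match t with
  | 0 => exact step_rounds_zero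
  | 1 => exact step_rounds_one
  | 2 => exact step_rounds_two
  | _ + 3 => exact Market.step_self_of_tentative_eq tentative_daMatching

theorem stable_daMatching : market.Stable daMatching := by
  refine Market.stable_of_unit market_q (by decide) ?_ ?_ <;>
    simp only [Market.IR, Market.Prefers] <;> decide

end IndirectEffect

/-- indirect time-constraint effect: there is a market with 4
students and 4 unit-capacity colleges where, under the TCDM with `T = 2` and
straightforward strategies, the lowest-priority student is assigned a college
she strictly prefers to her deferred-acceptance assignment (the unique stable
matching). -/
theorem exists_indirect_time_constraint_effect :
    ∃ M : Market 4 4, (∀ c, M.q c = 1) ∧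
      ∃ (app : ℕ → Fin 4 → Option (Fin 4)) (μDA : Fin 4 → Option (Fin 4)),
        M.IsRun app ∧ M.Stable μDA ∧
        M.Prefers (⟨3, by norm_num⟩ : Fin 4)
          (M.tentative (app 1) ⟨3, by norm_num⟩) (μDA ⟨3, by norm_num⟩) := by
  refine ⟨IndirectEffect.market, IndirectEffect.market_q, IndirectEffect.rounds,
    IndirectEffect.daMatching, IndirectEffect.isRun_rounds, IndirectEffect.stable_daMatching, ?_⟩
  rw [IndirectEffect.tentative_rounds_one, Market.Prefers]
  decide
end

section
/- The matching produced by the TCDM with a binding round limit under straightforward strategies need not be Pareto efficient for students: there exists a market and T such that another matching makes every student weakly better off and some student strictly better off than the TCDM outcome. -/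
open Finset
open scoped Classical

/-!
Two students with the same preferences, college `0` over college `1` over staying unassigned,
compete for two colleges with one seat each. With round limit `T = 1` the outcome is read off
after the first round, in which both apply to college `0`: student `0` is held there and
student `1` is rejected and left unassigned, although college `1` stays empty. Giving her that
seat makes her strictly better off and nobody worse off.
-/

namespace Market

variable {n m : ℕ} (M : Market n m)

theorem exists_step (app : Fin n → Option (Fin m)) : ∃ app', M.Step app app' := by
  have hbest : ∀ i, ∃ o, M.FeasibleOpt app i o ∧
      ∀ o', M.FeasibleOpt app i o' → M.rank i o ≤ M.rank i o' := by
    intro i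
    obtain ⟨o, ho, hmin⟩ := (univ.filter (M.FeasibleOpt app i)).exists_min_image (M.rank i)
      ⟨none, by simp [FeasibleOpt]⟩
    exact ⟨o, (mem_filter.mp ho).2, fun o' ho' => hmin o' (by simpa using ho')⟩
  choose best hbest using hbest
  refine ⟨fun i => if M.tentative app i = app i then app i else best i, fun i => ⟨?_, ?_⟩⟩
  · intro hkeep
    simp [hkeep]
  · intro hrej
    simpa [hrej] using hbest i

theorem exists_run : ∃ app, M.IsRun app := by
  choose first hfirst using fun i => Finite.exists_min (M.rank i)
  choose next hnext using M.exists_step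
  exact ⟨fun t => Nat.rec first (fun _ app => next app) t, hfirst, fun t => hnext _⟩

variable {M} in
theorem IsRun.first_round_eq {app : ℕ → Fin n → Option (Fin m)} (hrun : M.IsRun app)
    {i : Fin n} {o : Option (Fin m)} (htop : ∀ o', M.rank i o ≤ M.rank i o') : app 0 i = o :=
  M.rank_inj i (le_antisymm (hrun.1 i o) (htop _))

theorem tentative_eq_or_eq_none (app : Fin n → Option (Fin m)) (i : Fin n) :
    M.tentative app i = app i ∨ M.tentative app i = none := by
  unfold tentative
  split_ifs <;> simp

theorem tentative_eq_none_of_le_card {app : Fin n → Option (Fin m)} {i : Fin n} {c : Fin m}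
    (hi : app i = some c) (hfull : M.q c ≤ #{j | app j = some c ∧ j < i}) :
    M.tentative app i = none := by
  have hheld : ¬ M.Held app i := by
    rintro ⟨c', hc', hlt⟩
    obtain rfl : c' = c := Option.some_injective _ (hc'.symm.trans hi)
    omega
  simp [tentative, hheld]

theorem held_card_lt_of_tentative_eq {app : Fin n → Option (Fin m)} {i : Fin n} {c : Fin m}
    (h : M.tentative app i = some c) :
    app i = some c ∧ #{j | app j = some c ∧ j < i} < M.q c := by
  unfold tentative at h
  split_ifs at h with hheld
  obtain ⟨c', hc', hlt⟩ := hheld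
  obtain rfl : c' = c := Option.some_injective _ (hc'.symm.trans h)
  exact ⟨h, hlt⟩

/-- Counting higher-priority applicants injects the students held by `c` into `range (q c)`. -/
theorem tentative_isMatching (app : Fin n → Option (Fin m)) : M.IsMatching (M.tentative app) := by
  intro c
  let before : Fin n → ℕ := fun i => #{j | app j = some c ∧ j < i}
  have hmono : StrictMonoOn before {i | app i = some c} := by
    intro i hi i' _ hii'
    refine card_lt_card ⟨?_, fun hsub => ?_⟩
    · exact monotone_filter_right _ fun j _ hj => ⟨hj.1, hj.2.trans hii'⟩
    · have := hsub (mem_filter.mpr ⟨mem_univ i, hi, hii'⟩)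
      exact lt_irrefl i (mem_filter.mp this).2.2
  calc #{i | M.tentative app i = some c}
      ≤ #(range (M.q c)) := by
        refine card_le_card_of_injOn before (fun i hi => ?_) (hmono.injOn.mono fun i hi => ?_)
        · simpa using (M.held_card_lt_of_tentative_eq (mem_filter.mp hi).2).2
        · exact (M.held_card_lt_of_tentative_eq (mem_filter.mp hi).2).1
    _ = M.q c := card_range _

variable {M} in
theorem IsMatching.exists_paretoImprovement {μ : Fin n → Option (Fin m)} (hμ : M.IsMatching μ)
    {i : Fin n} {c : Fin m} (hi : μ i = none) (hc : #{j | μ j = some c} < M.q c)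
    (hacc : M.Prefers i (some c) none) :
    ∃ ν, M.IsMatching ν ∧ (∀ j, M.rank j (ν j) ≤ M.rank j (μ j)) ∧
      ∃ j, M.rank j (ν j) < M.rank j (μ j) := by
  refine ⟨Function.update μ i (some c), fun c' => ?_, fun j => ?_, i, ?_⟩
  · rcases eq_or_ne c' c with rfl | hc'
    · calc #{j | Function.update μ i (some c') j = some c'}
          ≤ #(insert i (univ.filter fun j => μ j = some c')) := by
            refine card_le_card fun j hj => ?_
            rcases eq_or_ne j i with rfl | hj'
            · exact mem_insert_self _ _
            · simp_all
        _ ≤ M.q c' := (card_insert_le _ _).trans hc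
    · refine le_trans (card_le_card fun j hj => ?_) (hμ c')
      rcases eq_or_ne j i with rfl | hj'
      · simp [hc'.symm] at hj
      · simp_all
  · rcases eq_or_ne j i with rfl | hj
    · simpa [hi] using hacc.le
    · simp [hj]
  · simpa [hi, Prefers] using hacc

end Market

noncomputable def commonTasteMarket : Market 2 2 :=
  mkMarket (fun _ => 1) (fun _ => Equiv.refl (Fin 2))

namespace commonTasteMarket

theorem rank_some (i c : Fin 2) : commonTasteMarket.rank i (some c) = c := rfl

theorem rank_none (i : Fin 2) : commonTasteMarket.rank i none = 2 := rfl

variable {app : ℕ → Fin 2 → Option (Fin 2)} (hrun : commonTasteMarket.IsRun app)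
include hrun

theorem first_round_eq (i : Fin 2) : app 0 i = some 0 :=
  hrun.first_round_eq fun o => by cases o <;> simp [rank_some, rank_none]

theorem outcome_one_eq_none : commonTasteMarket.tentative (app 0) 1 = none := by
  refine commonTasteMarket.tentative_eq_none_of_le_card (first_round_eq hrun 1) ?_
  exact card_pos.mpr ⟨0, by simp [first_round_eq hrun]⟩

theorem outcome_college_one_empty :
    #{j | commonTasteMarket.tentative (app 0) j = some 1} < commonTasteMarket.q 1 := by
  have hempty : ∀ j, commonTasteMarket.tentative (app 0) j ≠ some 1 := fun j => by
    rcases commonTasteMarket.tentative_eq_or_eq_none (app 0) j with h | h <;>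
      simp [h, first_round_eq hrun]
  rw [filter_false_of_mem fun j _ => hempty j, card_empty]
  exact Nat.one_pos

end commonTasteMarket

/-- the TCDM outcome with a binding round limit under
straightforward strategies need not be Pareto efficient: in some market another
matching makes every student weakly better off and some student strictly
better off. -/
theorem tcdm_not_always_pareto_efficient :
    ∃ (n m : ℕ) (M : Market n m) (T : ℕ) (app : ℕ → Fin n → Option (Fin m)),
      1 ≤ T ∧ M.IsRun app ∧
      ∃ ν : Fin n → Option (Fin m), M.IsMatching ν ∧
        (∀ i, M.rank i (ν i) ≤ M.rank i (M.tentative (app (T - 1)) i)) ∧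
        ∃ i, M.rank i (ν i) < M.rank i (M.tentative (app (T - 1)) i) := by
  obtain ⟨app, hrun⟩ := commonTasteMarket.exists_run
  exact ⟨2, 2, commonTasteMarket, 1, app, le_rfl, hrun,
    (commonTasteMarket.tentative_isMatching _).exists_paretoImprovement
      (commonTasteMarket.outcome_one_eq_none hrun)
      (commonTasteMarket.outcome_college_one_empty hrun) Nat.one_lt_two⟩
end
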